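/- Let n ≥ 1, let h be a real number with (n−2)·π/2 < h < n·π/2, and let μ = (μ₁, …, μₙ) ∈ ℝⁿ. Then the set { λ ∈ ℝⁿ : Θ(λ) = h and λᵢ ≥ μᵢ for all i } is a bounded subset of ℝⁿ if and only if for every index j ∈ {1, …, n} one has Σ_{i ≠ j} arctan(μᵢ) > h − π/2. -/
import Mathlib


open Real

/-- Lemma 3.3: the set `{λ ∈ ℝⁿ : Θ(λ) = h, λᵢ ≥ μᵢ ∀i}` is bounded if and
only if `Σ_{i ≠ j} arctan(μᵢ) > h - π/2` for every index `j`. -/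
theorem stmt_7 (n : ℕ) (hn : 1 ≤ n) (h : ℝ)
    (h1 : ((n : ℝ) - 2) * (π / 2) < h) (h2 : h < (n : ℝ) * (π / 2))
    (μ : Fin n → ℝ) :
    Bornology.IsBounded
        {l : Fin n → ℝ | (∑ i, Real.arctan (l i)) = h ∧ ∀ i, μ i ≤ l i} ↔
      ∀ j : Fin n, h - π / 2 < ∑ i ∈ Finset.univ.erase j, Real.arctan (μ i) := by
  have hpi := Real.pi_pos
  constructor
  · -- bounded → condition
    intro hb j
    by_contra hcon
    push_neg at hcon
    -- n ≥ 2
    have hn2 : 2 ≤ n := by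
      by_contra h'
      have hn1 : n = 1 := by omega
      subst hn1
      have he : (Finset.univ.erase j) = ∅ := by
        apply Finset.eq_empty_of_forall_notMem
        intro k hk
        exact (Finset.ne_of_mem_erase hk) (Subsingleton.elim k j)
      rw [he, Finset.sum_empty] at hcon
      norm_num at h2
      linarith
    have hn2' : (2 : ℝ) ≤ (n : ℝ) := by exact_mod_cast hn2
    obtain ⟨C, hC⟩ := isBounded_iff_forall_norm_le.mp hb
    -- choose a large t
    set w : ℝ := max (h - ((n : ℝ) - 1) * (π / 2)) 0 with hw_def
    have hw0 : 0 ≤ w := le_max_right _ _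
    have hw2 : w < π / 2 := by
      apply max_lt _ (by linarith)
      nlinarith
    set t : ℝ := max (tan w) (max (μ j) C) + 1 with ht_def
    have hwt : w < arctan t := by
      have h1t : tan w < t := by
        have := le_max_left (tan w) (max (μ j) C); linarith
      calc w = arctan (tan w) := (arctan_tan (by linarith) hw2).symm
        _ < arctan t := arctan_strictMono h1t
    have htμ : μ j ≤ t := by
      have := (le_max_left (μ j) C).trans (le_max_right (tan w) (max (μ j) C)); linarith
    have htC : C < t := by
      have := (le_max_right (μ j) C).trans (le_max_right (tan w) (max (μ j) C)); linarith
    have ht1 : h - ((n : ℝ) - 1) * (π / 2) < arctan t :=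
      lt_of_le_of_lt (le_max_left _ _) hwt
    -- the IVT function
    set g : ℝ → ℝ := fun s => arctan t + ∑ k ∈ Finset.univ.erase j, arctan (max (μ k) s)
      with hg_def
    have hgc : Continuous g := by
      apply continuous_const.add
      exact continuous_finset_sum _ fun k _ =>
        Real.continuous_arctan.comp (continuous_const.max continuous_id)
    have hne : (Finset.univ.erase j).Nonempty := by
      rw [← Finset.card_pos, Finset.card_erase_of_mem (Finset.mem_univ j)]
      simp only [Finset.card_univ, Fintype.card_fin]
      omega
    have hcard : ((Finset.univ.erase j).card : ℝ) = (n : ℝ) - 1 := by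
      rw [Finset.card_erase_of_mem (Finset.mem_univ j)]
      simp only [Finset.card_univ, Fintype.card_fin]
      rw [Nat.cast_sub hn]; norm_num
    -- first endpoint
    set s₀ : ℝ := (Finset.univ.erase j).inf' hne μ with hs0_def
    have hgs0 : g s₀ < h := by
      have he : ∑ k ∈ Finset.univ.erase j, arctan (max (μ k) s₀)
          = ∑ k ∈ Finset.univ.erase j, arctan (μ k) := by
        apply Finset.sum_congr rfl
        intro k hk
        rw [max_eq_left (Finset.inf'_le _ hk)]
      have := arctan_lt_pi_div_two t
      simp only [hg_def, he]
      linarith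
    -- second endpoint
    set u : ℝ := (h - arctan t) / ((n : ℝ) - 1) with hu_def
    have hnpos : (0 : ℝ) < (n : ℝ) - 1 := by linarith
    have hu2 : u < π / 2 := by
      rw [hu_def, div_lt_iff₀ hnpos]
      linarith
    set s₁ : ℝ := tan (max u 0) with hs1_def
    have harcs1 : arctan s₁ = max u 0 := by
      apply arctan_tan
      · have := le_max_right u 0; linarith
      · exact max_lt hu2 (by linarith)
    have hgs1 : h ≤ g s₁ := by
      have hsum : ((n : ℝ) - 1) * arctan s₁
          ≤ ∑ k ∈ Finset.univ.erase j, arctan (max (μ k) s₁) := by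
        rw [← hcard, ← nsmul_eq_mul]
        exact Finset.card_nsmul_le_sum _ _ _ fun k _ =>
          arctan_strictMono.monotone (le_max_right _ _)
      have h3 : u ≤ max u 0 := le_max_left _ _
      have h4 : ((n : ℝ) - 1) * u ≤ ((n : ℝ) - 1) * arctan s₁ := by
        rw [harcs1]; nlinarith
      have h5 : ((n : ℝ) - 1) * u = h - arctan t := by
        rw [hu_def]; field_simp
      simp only [hg_def]
      linarith
    -- IVT
    have hmem : h ∈ Set.uIcc (g s₀) (g s₁) :=
      Set.mem_uIcc.mpr (Or.inl ⟨le_of_lt hgs0, hgs1⟩)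
    obtain ⟨s, -, hgs⟩ := intermediate_value_uIcc hgc.continuousOn hmem
    -- the unbounded point
    set l : Fin n → ℝ := fun i => if i = j then t else max (μ i) s with hl_def
    have hlmem : l ∈ {l : Fin n → ℝ | (∑ i, Real.arctan (l i)) = h ∧ ∀ i, μ i ≤ l i} := by
      constructor
      · rw [← Finset.add_sum_erase _ _ (Finset.mem_univ j)]
        have hlj : l j = t := by simp [hl_def]
        have he : ∑ k ∈ Finset.univ.erase j, arctan (l k)
            = ∑ k ∈ Finset.univ.erase j, arctan (max (μ k) s) := by
          apply Finset.sum_congr rfl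
          intro k hk
          rw [hl_def]
          simp only [Finset.ne_of_mem_erase hk, if_false]
        rw [hlj, he]
        exact hgs
      · intro i
        rw [hl_def]
        by_cases hij : i = j
        · subst hij; simp [htμ]
        · simp only [hij, if_false]; exact le_max_left _ _
    have hnorm := hC l hlmem
    have hlj : l j = t := by simp [hl_def]
    have : t ≤ C := by
      calc t ≤ |t| := le_abs_self t
        _ = ‖l j‖ := by rw [hlj, Real.norm_eq_abs]
        _ ≤ ‖l‖ := norm_le_pi_norm l j
        _ ≤ C := hnorm
    linarith
  · -- condition → bounded
    intro hcond
    set B : Fin n → ℝ := fun i => tan (h - ∑ k ∈ Finset.univ.erase i, arctan (μ k))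
      with hB_def
    refine isBounded_iff_forall_norm_le.mpr ⟨∑ i, (|μ i| + |B i|), ?_⟩
    rintro x ⟨hsum, hge⟩
    have hC0 : 0 ≤ ∑ i, (|μ i| + |B i|) :=
      Finset.sum_nonneg fun i _ => by positivity
    rw [pi_norm_le_iff_of_nonneg hC0]
    intro i
    have key : arctan (x i) ≤ h - ∑ k ∈ Finset.univ.erase i, arctan (μ k) := by
      have ha : arctan (x i) + ∑ k ∈ Finset.univ.erase i, arctan (x k) = h := by
        rw [Finset.add_sum_erase Finset.univ (fun k => arctan (x k)) (Finset.mem_univ i)]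
        exact hsum
      have hb : ∑ k ∈ Finset.univ.erase i, arctan (μ k)
          ≤ ∑ k ∈ Finset.univ.erase i, arctan (x k) :=
        Finset.sum_le_sum fun k _ => arctan_strictMono.monotone (hge k)
      linarith
    have hlt : h - ∑ k ∈ Finset.univ.erase i, arctan (μ k) < π / 2 := by
      have := hcond i; linarith
    have hgt : -(π / 2) < arctan (x i) := neg_pi_div_two_lt_arctan _
    have hx : x i ≤ B i := by
      calc x i = tan (arctan (x i)) := (tan_arctan _).symm
        _ ≤ B i := by
            rw [hB_def]
            exact Real.strictMonoOn_tan.monotoneOn ⟨hgt, arctan_lt_pi_div_two _⟩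
              ⟨lt_of_lt_of_le hgt key, hlt⟩ key
    have hs : |μ i| + |B i| ≤ ∑ k, (|μ k| + |B k|) :=
      Finset.single_le_sum (f := fun k => |μ k| + |B k|) (fun k _ => by positivity) (Finset.mem_univ i)
    have h6 := neg_abs_le (μ i)
    have h7 := le_abs_self (B i)
    have h8 := hge i
    have h9 : (0:ℝ) ≤ |B i| := abs_nonneg _
    have h10 : (0:ℝ) ≤ |μ i| := abs_nonneg _
    rw [Real.norm_eq_abs]
    rw [abs_le]
    constructor <;> [linarith; linarith]
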